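/- On the elliptic curve E : y² = x³ + (t⁴+1)x² - t²(t²-1)x + t⁴ over 𝔽₃(t), the point P = (0, t²) satisfies 2P = (t², -t⁴), and P is a torsion point of exact order 5. -/

import Mathlib

/-! The tangent at `P = (0, t²)` has slope `t² - 1`, which gives `2P = (t², -t⁴)`; the tangent
there has slope `-t² - 1`, which gives `4P = (0, -t²) = -P`. Hence `5P = 0`, and as `5` is prime
and `P ≠ 0`, the order of `P` is `5`. -/

lemma addOrderOf_eq_five_of_two_nsmul_two_nsmul {G : Type*} [AddGroup G] {P Q : G}
    (hPQ : 2 • P = Q) (hQ : 2 • Q = -P) (hP : P ≠ 0) : addOrderOf P = 5 := by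
  have h5 : 5 • P = 0 := by
    calc 5 • P = 2 • (2 • P) + P := by rw [← mul_nsmul', ← succ_nsmul]
      _ = 0 := by rw [hPQ, hQ, neg_add_cancel]
  have : Fact (Nat.Prime 5) := ⟨Nat.prime_five⟩
  exact addOrderOf_eq_prime h5 hP

namespace WeierstrassCurve.Affine.Point

variable {F : Type*} [Field F] [DecidableEq F] {W : WeierstrassCurve.Affine F}

lemma two_nsmul_some_of_Y_ne {x y x' y' : F} {h : W.Nonsingular x y} (h' : W.Nonsingular x' y')
    (hy : y ≠ W.negY x y) (hx' : W.addX x x (W.slope x x y y) = x')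
    (hy' : W.addY x x y (W.slope x x y y) = y') : 2 • some x y h = some x' y' h' := by
  subst hx' hy'
  exact (two_nsmul _).trans (add_self_of_Y_ne hy)

end WeierstrassCurve.Affine.Point

namespace SupersingularK3

open Classical WeierstrassCurve.Affine

local notation "t" => (RatFunc.X : RatFunc (ZMod 3))

noncomputable def E : WeierstrassCurve.Affine (RatFunc (ZMod 3)) :=
  { a₁ := 0, a₂ := t ^ 4 + 1, a₃ := 0, a₄ := -(t ^ 2 * (t ^ 2 - 1)), a₆ := t ^ 4 }

lemma three_eq_zero : (3 : RatFunc (ZMod 3)) = 0 :=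
  CharP.cast_eq_zero (RatFunc (ZMod 3)) 3

lemma X_pow_ne_zero (n : ℕ) : t ^ n ≠ 0 :=
  pow_ne_zero n RatFunc.X_ne_zero

lemma ne_negY_of_ne_zero {x y : RatFunc (ZMod 3)} (hy : y ≠ 0) : y ≠ E.negY x y := by
  intro h
  simp only [E, negY] at h
  exact hy (by linear_combination y * three_eq_zero - h)

lemma slope_eq_of_ne_zero {x y ℓ : RatFunc (ZMod 3)} (hy : y ≠ 0)
    (hℓ : ℓ * (y - E.negY x y) = 3 * x ^ 2 + 2 * E.a₂ * x + E.a₄ - E.a₁ * y) :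
    E.slope x x y y = ℓ := by
  rw [slope_of_Y_ne rfl (ne_negY_of_ne_zero hy), div_eq_iff, hℓ]
  exact sub_ne_zero.mpr (ne_negY_of_ne_zero hy)

lemma slope_P : E.slope 0 0 (t ^ 2) (t ^ 2) = t ^ 2 - 1 :=
  slope_eq_of_ne_zero (X_pow_ne_zero 2) <| by
    simp only [E, negY]; linear_combination (t ^ 4 - t ^ 2) * three_eq_zero

lemma slope_twoP : E.slope (t ^ 2) (t ^ 2) (-(t ^ 4)) (-(t ^ 4)) = -(t ^ 2) - 1 :=
  slope_eq_of_ne_zero (neg_ne_zero.mpr (X_pow_ne_zero 4)) <| by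
    simp only [E, negY]; linear_combination -t ^ 2 * three_eq_zero

lemma nonsingular_twoP : E.Nonsingular (t ^ 2) (-(t ^ 4)) := by
  refine (nonsingular_iff _ _).mpr
    ⟨?_, Or.inr (ne_negY_of_ne_zero (neg_ne_zero.mpr (X_pow_ne_zero 4)))⟩
  rw [equation_iff]; simp only [E]; linear_combination (-(t ^ 4)) * three_eq_zero

lemma two_nsmul_P (h : E.Nonsingular 0 (t ^ 2)) :
    2 • Point.some _ _ h = Point.some _ _ nonsingular_twoP :=
  Point.two_nsmul_some_of_Y_ne _ (ne_negY_of_ne_zero (X_pow_ne_zero 2))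
    (by rw [slope_P]; simp only [E, addX]; linear_combination (-(t ^ 2)) * three_eq_zero)
    (by rw [slope_P]; simp only [E, addY, addX, negAddY, negY]
        linear_combination (t ^ 4 - t ^ 2) * three_eq_zero)

lemma two_nsmul_twoP (h : E.Nonsingular 0 (t ^ 2)) :
    2 • Point.some _ _ nonsingular_twoP = -Point.some _ _ h :=
  Point.two_nsmul_some_of_Y_ne _ (ne_negY_of_ne_zero (neg_ne_zero.mpr (X_pow_ne_zero 4)))
    (by rw [slope_twoP]; simp only [E, addX]; ring)
    (by rw [slope_twoP]; simp only [E, addY, addX, negAddY, negY]; ring)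

end SupersingularK3

open Classical in
open WeierstrassCurve.Affine in
/-- On `y² = x³ + (t⁴+1)x² - t²(t²-1)x + t⁴` over `𝔽₃(t)`, the point `P = (0, t²)`
satisfies `2P = (t², -t⁴)`, and `P` is a torsion point of exact order `5`. -/
theorem stmt18 :
    letI t : RatFunc (ZMod 3) := RatFunc.X
    letI W : WeierstrassCurve.Affine (RatFunc (ZMod 3)) :=
      { a₁ := 0, a₂ := t ^ 4 + 1, a₃ := 0, a₄ := -(t ^ 2 * (t ^ 2 - 1)), a₆ := t ^ 4 }
    ∀ h : W.Nonsingular 0 (t ^ 2),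
      (∃ h2 : W.Nonsingular (t ^ 2) (-(t ^ 4)), 2 • Point.some _ _ h = Point.some _ _ h2) ∧
        addOrderOf (Point.some _ _ h) = 5 := fun h =>
  ⟨⟨SupersingularK3.nonsingular_twoP, SupersingularK3.two_nsmul_P h⟩,
    addOrderOf_eq_five_of_two_nsmul_two_nsmul (SupersingularK3.two_nsmul_P h)
      (SupersingularK3.two_nsmul_twoP h) (Point.some_ne_zero h)⟩
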